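/- arXiv:2202.07638 — 2 statements merged into one kernel-verified Lean document; each statement's English description precedes it below -/
import Mathlib

section
/- Let |·|_{G_1},…,|·|_{G_N} be norms on ℝ^n, let |·|_S be a monotone norm on ℝ^N, and let |·|_G be the associated composite norm on ℝ^{nN}. Let A ∈ ℝ^{nN×nN} be partitioned into blocks A_{ij} ∈ ℝ^{n×n}, i,j = 1,…,N, and define the N×N matrix Â by Â_{ii} = μ_{G_i}(A_{ii}) (the matrix measure of the i-th diagonal block with respect to |·|_{G_i}) and, for i ≠ j, Â_{ij} = ‖A_{ij}‖_{G_{i,j}}, the operator norm of A_{ij} viewed as a linear map from (ℝ^n, |·|_{G_j}) to (ℝ^n, |·|_{G_i}). Then μ_G(A) ≤ μ_S(Â), where μ_G and μ_S are the matrix measures induced by |·|_G and |·|_S respectively. -/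
open Filter Set

/-- `ν` is a norm on the real vector space `E`. -/
def IsNorm {E : Type*} [AddCommGroup E] [Module ℝ E] (ν : E → ℝ) : Prop :=
  (∀ x, 0 ≤ ν x) ∧ (∀ x, ν x = 0 → x = 0) ∧
  (∀ (a : ℝ) (x : E), ν (a • x) = |a| * ν x) ∧
  (∀ x y : E, ν (x + y) ≤ ν x + ν y)

/-- The operator norm of a map `L` with respect to a norm `νE` on the domain and a norm
`νF` on the codomain: the supremum of `νF (L x)` over the unit sphere `νE x = 1`. -/
noncomputable def opNorm {E F : Type*} (νE : E → ℝ) (νF : F → ℝ) (L : E → F) : ℝ :=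
  sSup {c | ∃ x, νE x = 1 ∧ c = νF (L x)}

/-- `μ` is the matrix measure (logarithmic norm) of the linear map `L` with respect to the
norm `ν`, i.e. `μ = lim_{h→0⁺} (‖I + hL‖ − 1)/h` where `‖·‖` is the operator norm
induced by `ν`. -/
def HasMatMeasure {E : Type*} [Add E] [SMul ℝ E] (ν : E → ℝ) (L : E → E) (μ : ℝ) : Prop :=
  Tendsto (fun h : ℝ => (opNorm ν ν (fun x => x + h • L x) - 1) / h)
    (nhdsWithin (0 : ℝ) (Set.Ioi 0)) (nhds μ)

/-- The action on `ℝ^{nN}` (viewed as `Fin N → Fin n → ℝ`) of the block-partitioned matrix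
`A ∈ ℝ^{nN×nN}` with blocks `A i j ∈ ℝ^{n×n}`. -/
noncomputable def blockMulVec {N n : ℕ} (A : Fin N → Fin N → Matrix (Fin n) (Fin n) ℝ)
    (η : Fin N → Fin n → ℝ) : Fin N → Fin n → ℝ :=
  fun i => ∑ j, (A i j).mulVec (η j)

/-!
Fix `h > 0` and `η` with block norms `v_i = |η_i|_{G_i}`. The triangle inequality in block `i`
gives `|(η + hAη)_i|_{G_i} ≤ ‖I + hA_ii‖ v_i + h ∑_{j ≠ i} ‖A_ij‖ v_j`, and for small `h` the
diagonal factor is at most `1 + h (Â_ii + ε)`, so the block-norm vector of `(I + hA) η` is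
dominated componentwise by `(I + hÂ) v + hε v`. Monotonicity of `|·|_S` turns this into
`‖I + hA‖_G ≤ ‖I + hÂ‖_S + hε`; subtracting `1`, dividing by `h` and letting `h → 0⁺` gives
`μ_G(A) ≤ μ_S(Â) + ε` for every `ε > 0`.
-/

open Topology

namespace IsNorm

variable {E : Type*} [AddCommGroup E] [Module ℝ E] {ν : E → ℝ}

theorem nonneg (hν : IsNorm ν) (x : E) : 0 ≤ ν x := hν.1 x

theorem eq_zero_of_apply_eq_zero (hν : IsNorm ν) {x : E} (hx : ν x = 0) : x = 0 := hν.2.1 x hx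

theorem map_smul (hν : IsNorm ν) (a : ℝ) (x : E) : ν (a • x) = |a| * ν x := hν.2.2.1 a x

theorem add_le (hν : IsNorm ν) (x y : E) : ν (x + y) ≤ ν x + ν y := hν.2.2.2 x y

theorem map_zero (hν : IsNorm ν) : ν 0 = 0 := by
  simpa using hν.map_smul 0 0

theorem map_smul_of_nonneg (hν : IsNorm ν) {a : ℝ} (ha : 0 ≤ a) (x : E) : ν (a • x) = a * ν x := by
  rw [hν.map_smul, abs_of_nonneg ha]

theorem sum_le (hν : IsNorm ν) {ι : Type*} (s : Finset ι) (f : ι → E) :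
    ν (∑ i ∈ s, f i) ≤ ∑ i ∈ s, ν (f i) := by
  classical
  induction s using Finset.induction with
  | empty => simp [hν.map_zero]
  | insert i s hi ih =>
    rw [Finset.sum_insert hi, Finset.sum_insert hi]
    exact (hν.add_le _ _).trans (by gcongr)

theorem convexOn (hν : IsNorm ν) : ConvexOn ℝ univ ν :=
  ⟨convex_univ, fun x _ y _ a b ha hb _ => by
    simpa only [hν.map_smul_of_nonneg ha, hν.map_smul_of_nonneg hb, smul_eq_mul]
      using hν.add_le (a • x) (b • y)⟩

end IsNorm

section FiniteDimensional

variable {E F : Type*} [NormedAddCommGroup E] [NormedSpace ℝ E] [FiniteDimensional ℝ E]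
  [NormedAddCommGroup F] [NormedSpace ℝ F] [FiniteDimensional ℝ F] {νE : E → ℝ} {νF : F → ℝ}

theorem IsNorm.continuous (hν : IsNorm νE) : Continuous νE :=
  continuousOn_univ.mp (hν.convexOn.continuousOn isOpen_univ)

theorem IsNorm.exists_pos_mul_norm_le (hν : IsNorm νE) : ∃ c > 0, ∀ x, c * ‖x‖ ≤ νE x := by
  have hpos : ∀ x ∈ Metric.sphere (0 : E) 1, 0 < νE x := fun x hx =>
    (hν.nonneg x).lt_of_ne' fun h0 => by simp [hν.eq_zero_of_apply_eq_zero h0] at hx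
  obtain ⟨c, hc, hcle⟩ := (isCompact_sphere (0 : E) 1).exists_forall_le'
    hν.continuous.continuousOn hpos
  refine ⟨c, hc, fun x => ?_⟩
  rcases eq_or_ne x 0 with rfl | hx
  · simp [hν.map_zero]
  have hxn : 0 < ‖x‖ := norm_pos_iff.mpr hx
  have hmem : ‖x‖⁻¹ • x ∈ Metric.sphere (0 : E) 1 := by
    simp [norm_smul, hxn.ne']
  have := hcle _ hmem
  rw [hν.map_smul_of_nonneg (inv_nonneg.mpr hxn.le)] at this
  rw [mul_comm]
  exact (le_inv_mul_iff₀ hxn).mp this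

theorem IsNorm.bddAbove_opNorm_set (hE : IsNorm νE) (hF : IsNorm νF) (L : E →ₗ[ℝ] F) :
    BddAbove {c | ∃ x, νE x = 1 ∧ c = νF (L x)} := by
  obtain ⟨c, hc, hcle⟩ := hE.exists_pos_mul_norm_le
  have hball : {x | νE x = 1} ⊆ Metric.closedBall 0 c⁻¹ := fun x (hx : νE x = 1) => by
    rw [mem_closedBall_zero_iff, ← mul_one c⁻¹, le_inv_mul_iff₀ hc, ← hx]
    exact hcle x
  refine ((isCompact_closedBall (0 : E) c⁻¹).image
    (hF.continuous.comp L.continuous_of_finiteDimensional)).bddAbove.mono ?_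
  rintro _ ⟨x, hx, rfl⟩
  exact ⟨x, hball hx, rfl⟩

theorem IsNorm.apply_le_opNorm_mul (hE : IsNorm νE) (hF : IsNorm νF) (L : E →ₗ[ℝ] F) (x : E) :
    νF (L x) ≤ opNorm νE νF L * νE x := by
  rcases (hE.nonneg x).eq_or_lt' with hx | hx
  · simp [hE.eq_zero_of_apply_eq_zero hx, hE.map_zero, hF.map_zero]
  have hunit : νE ((νE x)⁻¹ • x) = 1 := by
    rw [hE.map_smul_of_nonneg (inv_nonneg.mpr hx.le), inv_mul_cancel₀ hx.ne']
  have hle := le_csSup (hE.bddAbove_opNorm_set hF L) ⟨_, hunit, rfl⟩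
  rw [L.map_smul, hF.map_smul_of_nonneg (inv_nonneg.mpr hx.le)] at hle
  rwa [← inv_mul_le_iff₀' hx]

end FiniteDimensional

section OpNorm

variable {E F : Type*}

theorem opNorm_nonneg {νE : E → ℝ} {νF : F → ℝ} (hνF : ∀ y, 0 ≤ νF y) (L : E → F) :
    0 ≤ opNorm νE νF L :=
  Real.sSup_nonneg fun _ ⟨x, _, hc⟩ => hc ▸ hνF (L x)

theorem opNorm_le {νE : E → ℝ} {νF : F → ℝ} {L : E → F} {K : ℝ} (hK : 0 ≤ K)
    (h : ∀ x, νE x = 1 → νF (L x) ≤ K) : opNorm νE νF L ≤ K :=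
  Real.sSup_le (fun _ ⟨x, hx, hc⟩ => hc ▸ h x hx) hK

theorem HasMatMeasure.eventually_opNorm_le [Add E] [SMul ℝ E] {ν : E → ℝ} {L : E → E} {μ c : ℝ}
    (hμ : HasMatMeasure ν L μ) (hc : μ < c) :
    ∀ᶠ h in 𝓝[>] 0, opNorm ν ν (fun x => x + h • L x) ≤ 1 + h * c := by
  filter_upwards [hμ.eventually (eventually_lt_nhds hc), self_mem_nhdsWithin]
    with h hlt (hh : 0 < h)
  rw [div_lt_iff₀ hh] at hlt
  linarith

end OpNorm

theorem opNorm_composite_le {ι E : Type*} [Fintype ι] {S : (ι → ℝ) → ℝ} (hS : IsNorm S)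
    (hSmono : ∀ x y : ι → ℝ, (∀ i, 0 ≤ x i) → (∀ i, x i ≤ y i) → S x ≤ S y)
    {G : ι → E → ℝ} (hG : ∀ i x, 0 ≤ G i x) {T : (ι → E) → ι → E}
    (L : (ι → ℝ) →ₗ[ℝ] ι → ℝ) {c : ℝ} (hc : 0 ≤ c)
    (hT : ∀ η i, G i (T η i) ≤ L (fun j => G j (η j)) i + c * G i (η i)) :
    opNorm (fun η : ι → E => S fun i => G i (η i)) (fun η => S fun i => G i (η i)) T ≤
      opNorm S S L + c := by
  refine opNorm_le (add_nonneg (opNorm_nonneg hS.nonneg L) hc) fun η (hη : S _ = 1) => ?_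
  set v : ι → ℝ := fun i => G i (η i)
  calc S (fun i => G i (T η i)) ≤ S (L v + c • v) :=
        hSmono _ _ (fun i => hG i _) (by simpa using hT η)
    _ ≤ S (L v) + S (c • v) := hS.add_le _ _
    _ ≤ opNorm S S L * S v + c * S v :=
        add_le_add (hS.apply_le_opNorm_mul hS L v) (hS.map_smul_of_nonneg hc v).le
    _ = opNorm S S L + c := by rw [hη]; ring

theorem norm_add_smul_blockMulVec_le {n N : ℕ} {G : Fin N → (Fin n → ℝ) → ℝ}
    (hG : ∀ i, IsNorm (G i)) (A : Fin N → Fin N → Matrix (Fin n) (Fin n) ℝ) {h : ℝ} (hh : 0 ≤ h)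
    (η : Fin N → Fin n → ℝ) (i : Fin N) :
    G i ((η + h • blockMulVec A η) i) ≤
      opNorm (G i) (G i) (fun x => x + h • (A i i).mulVec x) * G i (η i) +
        h * ∑ j ∈ Finset.univ.erase i, opNorm (G j) (G i) (A i j).mulVec * G j (η j) := by
  have hsplit : (η + h • blockMulVec A η) i =
      (η i + h • (A i i).mulVec (η i)) + ∑ j ∈ Finset.univ.erase i, h • (A i j).mulVec (η j) := by
    simp only [blockMulVec, Pi.add_apply, Pi.smul_apply,
      ← Finset.add_sum_erase _ _ (Finset.mem_univ i), smul_add, Finset.smul_sum]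
    abel
  rw [hsplit, Finset.mul_sum]
  refine ((hG i).add_le _ _).trans (add_le_add ?_ <|
    ((hG i).sum_le _ _).trans <| Finset.sum_le_sum fun j _ => ?_)
  · exact (hG i).apply_le_opNorm_mul (hG i) (LinearMap.id + h • (A i i).mulVecLin) (η i)
  · rw [(hG i).map_smul_of_nonneg hh]
    exact mul_le_mul_of_nonneg_left ((hG j).apply_le_opNorm_mul (hG i) (A i j).mulVecLin _) hh

theorem norm_add_smul_blockMulVec_le_majorant {n N : ℕ} {G : Fin N → (Fin n → ℝ) → ℝ}
    (hG : ∀ i, IsNorm (G i)) {A : Fin N → Fin N → Matrix (Fin n) (Fin n) ℝ}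
    {M : Matrix (Fin N) (Fin N) ℝ} {h ε : ℝ} (hh : 0 ≤ h) {i : Fin N}
    (hdiag : opNorm (G i) (G i) (fun x => x + h • (A i i).mulVec x) ≤ 1 + h * (M i i + ε))
    (hoff : ∀ j, i ≠ j → opNorm (G j) (G i) (A i j).mulVec ≤ M i j) (η : Fin N → Fin n → ℝ) :
    G i ((η + h • blockMulVec A η) i) ≤
      ((fun j => G j (η j)) + h • M.mulVec fun j => G j (η j)) i + h * ε * G i (η i) := by
  have hv : ∀ j, 0 ≤ G j (η j) := fun j => (hG j).nonneg _
  calc G i ((η + h • blockMulVec A η) i)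
      ≤ opNorm (G i) (G i) (fun x => x + h • (A i i).mulVec x) * G i (η i) +
          h * ∑ j ∈ Finset.univ.erase i, opNorm (G j) (G i) (A i j).mulVec * G j (η j) :=
        norm_add_smul_blockMulVec_le hG A hh η i
    _ ≤ (1 + h * (M i i + ε)) * G i (η i) +
          h * ∑ j ∈ Finset.univ.erase i, M i j * G j (η j) := by
        gcongr with j hj
        · exact hv i
        · exact hv j
        · exact hoff j (Finset.ne_of_mem_erase hj).symm
    _ = _ := by
        simp only [Pi.add_apply, Pi.smul_apply, smul_eq_mul, Matrix.mulVec, dotProduct,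
          ← Finset.add_sum_erase _ _ (Finset.mem_univ i)]
        ring

/-- Let `|·|_{G_i}` be norms on `ℝ^n`, `|·|_S` a monotone norm on `ℝ^N`, and
`|·|_G` the composite norm `|η|_G = |(|η_1|_{G_1},…,|η_N|_{G_N})|_S` on `ℝ^{nN}`.  For a
block-partitioned `A ∈ ℝ^{nN×nN}`, let `Â` be the `N×N` matrix with `Â_{ii} = μ_{G_i}(A_{ii})`
and `Â_{ij} = ‖A_{ij}‖_{G_{i,j}}` (operator norm from `(ℝ^n,|·|_{G_j})` to `(ℝ^n,|·|_{G_i})`)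
for `i ≠ j`.  Then `μ_G(A) ≤ μ_S(Â)`. -/
theorem measure_composite_le_measure_majorant
    {n N : ℕ}
    (G : Fin N → (Fin n → ℝ) → ℝ) (hG : ∀ i, IsNorm (G i))
    (S : (Fin N → ℝ) → ℝ) (hS : IsNorm S)
    (hSmono : ∀ x y : Fin N → ℝ, (∀ i, 0 ≤ x i) → (∀ i, x i ≤ y i) → S x ≤ S y)
    (A : Fin N → Fin N → Matrix (Fin n) (Fin n) ℝ)
    (Ahat : Matrix (Fin N) (Fin N) ℝ)
    (μdiag : Fin N → ℝ)
    (hμdiag : ∀ i, HasMatMeasure (G i) (A i i).mulVec (μdiag i))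
    (hAhat_diag : ∀ i, Ahat i i = μdiag i)
    (hAhat_off : ∀ i j, i ≠ j → Ahat i j = opNorm (G j) (G i) (A i j).mulVec)
    (μG μS : ℝ)
    (hμG : HasMatMeasure (fun η : Fin N → Fin n → ℝ => S (fun i => G i (η i)))
      (blockMulVec A) μG)
    (hμS : HasMatMeasure S Ahat.mulVec μS) :
    μG ≤ μS := by
  refine le_of_forall_pos_le_add fun ε hε => ?_
  have hdiag : ∀ᶠ h in 𝓝[>] 0, ∀ i,
      opNorm (G i) (G i) (fun x => x + h • (A i i).mulVec x) ≤ 1 + h * (Ahat i i + ε) :=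
    eventually_all.2 fun i =>
      (hμdiag i).eventually_opNorm_le (by rw [hAhat_diag]; exact lt_add_of_pos_right _ hε)
  refine le_of_tendsto_of_tendsto hμG (hμS.add_const ε) ?_
  filter_upwards [hdiag, self_mem_nhdsWithin] with h hP (hh : 0 < h)
  have hcomp : opNorm (fun η => S fun i => G i (η i)) (fun η => S fun i => G i (η i))
      (fun η => η + h • blockMulVec A η) ≤ opNorm S S (fun x => x + h • Ahat.mulVec x) + h * ε :=
    opNorm_composite_le hS hSmono (fun i => (hG i).nonneg) (LinearMap.id + h • Ahat.mulVecLin)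
      (mul_nonneg hh.le hε.le) fun η i =>
        norm_add_smul_blockMulVec_le_majorant hG hh.le (hP i)
          (fun j hij => (hAhat_off i j hij).ge) η
  rw [div_add' _ _ _ hh.ne', div_le_div_iff_of_pos_right hh]
  linarith
end

section
/- (Halanay-type inequality.) Let τ_max ≥ 0 be finite and let u : [t₀ − τ_max, +∞) → ℝ_{≥0} be continuous, and suppose D⁺u(t) ≤ a·u(t) + b·sup_{t−τ(t) ≤ s ≤ t} u(s) + c for all t ≥ t₀, where: (i) τ(t) is nonnegative and bounded, 0 ≤ τ(t) ≤ τ_max for all t; (ii) u is bounded on [t₀ − τ_max, t₀]; (iii) a < 0, b ≥ 0, c ≥ 0; and (iv) there exists σ > 0 with a + b ≤ −σ < 0. Then for all t ≥ t₀, u(t) ≤ (sup_{t₀ − τ_max ≤ s ≤ t₀} u(s))·e^{−λ̂(t−t₀)} + c/σ, where λ̂ := inf_{t ≥ t₀} { λ(t) : λ(t) + a + b·e^{λ(t)τ(t)} = 0, λ(t) > 0 } is positive. -/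
/-!
Compare `u` with `w(t) = M e^{-λ̂(t - t₀)} + c/σ + ε`, where `M` is the initial supremum, so
that `u < w` on `[t₀ - τ_max, t₀]`. At the first time `T` at which `u` reaches `w`, we have
`u ≤ w` on `[T - τ(T), T]`, and since `w` decreases, the hypothesis bounds `D⁺u(T)` by
`a w(T) + b w(T - τ(T)) + c`. As `λ̂ ≤ λ(T)`, this is at most `w'(T) - σε < w'(T)`, whereas
`u` crossing `w` from below forces `D⁺u(T) ≥ w'(T)`. Letting `ε → 0` gives the bound.

`λ̂ > 0` because `x + a + b e^{xτ}` increases in both `x` and `τ`, so every root `λ(t)` exceeds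
any `λ₀ > 0` with `λ₀ + a + b e^{λ₀ τ_max} < 0`; such a `λ₀` exists since the value at `0`
is `a + b < 0`.
-/

open Filter Set Topology Real

/-- Upper (right) Dini derivative: `D⁺u(t) = limsup_{h→0⁺} (u(t+h) − u(t))/h`. -/
noncomputable def diniDeriv (u : ℝ → ℝ) (t : ℝ) : ℝ :=
  Filter.limsup (fun h : ℝ => (u (t + h) - u t) / h) (nhdsWithin (0 : ℝ) (Set.Ioi 0))

noncomputable def delayChar (a b τ x : ℝ) : ℝ := x + a + b * exp (x * τ)

section DelayChar

variable {a b τ : ℝ}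

lemma delayChar_monotone (hb : 0 ≤ b) (hτ : 0 ≤ τ) : Monotone (delayChar a b τ) :=
  fun x y hxy => by unfold delayChar; gcongr

lemma delayChar_le_of_delay_le {τ' x : ℝ} (hb : 0 ≤ b) (hx : 0 ≤ x) (hτ : τ ≤ τ') :
    delayChar a b τ x ≤ delayChar a b τ' x := by
  unfold delayChar; gcongr

lemma exists_pos_lt_of_delayChar_eq_zero (hb : 0 ≤ b) (hab : a + b < 0) (τmax : ℝ) :
    ∃ x₀ > 0, ∀ τ x, 0 ≤ τ → τ ≤ τmax → delayChar a b τ x = 0 → x₀ < x := by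
  have hcont : Continuous (delayChar a b τmax) := by unfold delayChar; fun_prop
  have h0 : delayChar a b τmax 0 < 0 := by simpa [delayChar] using hab
  have hneg : ∀ᶠ x in 𝓝[>] 0, delayChar a b τmax x < 0 :=
    ((hcont.tendsto 0).eventually (gt_mem_nhds h0)).filter_mono nhdsWithin_le_nhds
  obtain ⟨x₀, hx₀, hx₀pos⟩ := (hneg.and self_mem_nhdsWithin).exists
  refine ⟨x₀, hx₀pos, fun τ x hτ hτmax hx => lt_of_not_ge fun hle => ?_⟩
  have : delayChar a b τ x ≤ delayChar a b τmax x₀ :=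
    (delayChar_monotone hb hτ hle).trans (delayChar_le_of_delay_le hb hx₀pos.le hτmax)
  linarith

end DelayChar

/-- If the difference quotients are unbounded above, `diniDeriv` takes the junk value
`sInf ∅ = 0`; this is why `L ≤ 0` is assumed. -/
lemma le_diniDeriv_of_frequently_le {u w : ℝ → ℝ} {t L : ℝ} (hw : HasDerivAt w L t)
    (hL : L ≤ 0) (heq : u t = w t) (hfreq : ∃ᶠ s in 𝓝[>] t, w s ≤ u s) :
    L ≤ diniDeriv u t := by
  rw [diniDeriv, limsup_eq]
  rcases eq_empty_or_nonempty {A | ∀ᶠ h in 𝓝[>] (0 : ℝ), (u (t + h) - u t) / h ≤ A}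
    with hemp | hne
  · rwa [hemp, Real.sInf_empty]
  refine le_csInf hne fun A hA => le_of_not_gt fun hAL => ?_
  replace hA : ∀ᶠ h in 𝓝[>] (0 : ℝ), (u (t + h) - u t) / h ≤ A := hA
  have hfreq₀ : ∃ᶠ h in 𝓝[>] (0 : ℝ), w (t + h) ≤ u (t + h) :=
    frequently_map (m := (t + ·)) (P := fun s => w s ≤ u s) |>.1
      (by rwa [map_add_left_nhdsGT, add_zero])
  have hslope :=
    (hw.tendsto_slope_zero_right.eventually (lt_mem_nhds hAL)).and self_mem_nhdsWithin
  obtain ⟨h, ⟨hu_le, hw_gt, hpos⟩, hwu⟩ := ((hA.and hslope).and_frequently hfreq₀).exists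
  rw [smul_eq_mul, inv_mul_eq_div] at hw_gt
  have : (w (t + h) - w t) / h ≤ (u (t + h) - u t) / h :=
    div_le_div_of_nonneg_right (by linarith) (le_of_lt hpos)
  linarith

lemma exists_first_crossing {u w : ℝ → ℝ} {t0 t1 : ℝ} (hu : ContinuousOn u (Ici t0))
    (hw : ContinuousOn w (Ici t0)) (h0 : u t0 < w t0) (ht1 : t0 ≤ t1) (h1 : w t1 < u t1) :
    ∃ T, t0 < T ∧ u T = w T ∧ (∀ s ∈ Ico t0 T, u s ≤ w s) ∧ ∃ᶠ s in 𝓝[>] T, w s < u s := by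
  set S := {s | t0 ≤ s ∧ w s < u s}
  have hSne : S.Nonempty := ⟨t1, ht1, h1⟩
  have hSbdd : BddBelow S := ⟨t0, fun s hs => hs.1⟩
  set T := sInf S
  have hT0 : t0 ≤ T := le_csInf hSne fun s hs => hs.1
  have hcont {s : Set ℝ} (hs : s ⊆ Ici t0) :
      ContinuousWithinAt u s T ∧ ContinuousWithinAt w s T :=
    ⟨(hu T hT0).mono hs, (hw T hT0).mono hs⟩
  have hbefore : ∀ s ∈ Ico t0 T, u s ≤ w s := fun s hs =>
    not_lt.1 fun hlt => (csInf_le hSbdd ⟨hs.1, hlt⟩).not_gt hs.2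
  have hclS : T ∈ closure S := csInf_mem_closure hSne hSbdd
  have hwu : w T ≤ u T := by
    have hS : S ⊆ Ici t0 := fun s hs => hs.1
    exact ContinuousWithinAt.closure_le hclS (hcont hS).2 (hcont hS).1 fun s hs => hs.2.le
  have hT : t0 < T := hT0.lt_of_ne fun h => by rw [← h] at hwu; linarith
  have huw : u T ≤ w T := by
    have hI : Ico t0 T ⊆ Ici t0 := Ico_subset_Ici_self
    refine ContinuousWithinAt.closure_le ?_ (hcont hI).1 (hcont hI).2 hbefore
    rw [closure_Ico hT.ne]
    exact ⟨hT0, le_rfl⟩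
  refine ⟨T, hT, huw.antisymm hwu, hbefore, ?_⟩
  rw [frequently_nhdsWithin_iff]
  refine (mem_closure_iff_frequently.1 hclS).mono fun s hs => ⟨hs.2, ?_⟩
  refine (csInf_le hSbdd hs).lt_of_ne fun hTs => ?_
  have := hs.2
  rw [← hTs] at this
  linarith

theorem le_of_diniDeriv_lt_of_crossing {u w w' : ℝ → ℝ} {r t0 : ℝ} (hr : r ≤ t0)
    (hu : ContinuousOn u (Ici t0)) (hw : ∀ t, HasDerivAt w (w' t) t) (hw' : ∀ t, w' t ≤ 0)
    (hinit : ∀ t ∈ Icc r t0, u t < w t)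
    (hcross : ∀ T, t0 < T → u T = w T → (∀ s ∈ Icc r T, u s ≤ w s) → diniDeriv u T < w' T)
    {t : ℝ} (ht : t0 ≤ t) : u t ≤ w t := by
  by_contra! h
  have hwc : Continuous w := continuous_iff_continuousAt.2 fun t => (hw t).continuousAt
  obtain ⟨T, hT, heq, hbefore, hfreq⟩ :=
    exists_first_crossing hu hwc.continuousOn (hinit t0 ⟨hr, le_rfl⟩) ht h
  have hhist : ∀ s ∈ Icc r T, u s ≤ w s := by
    rintro s ⟨hrs, hsT⟩
    rcases le_or_gt s t0 with hs | hs
    · exact (hinit s ⟨hrs, hs⟩).le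
    rcases hsT.lt_or_eq with hsT | rfl
    · exact hbefore s ⟨hs.le, hsT⟩
    · exact heq.le
  have := le_diniDeriv_of_frequently_le (hw T) (hw' T) heq (hfreq.mono fun _ => le_of_lt)
  linarith [hcross T hT heq hhist]

noncomputable def halanayBound (K μ D t0 t : ℝ) : ℝ := K * exp (-μ * (t - t0)) + D

section HalanayBound

variable {K μ D t0 : ℝ}

lemma hasDerivAt_halanayBound (t : ℝ) :
    HasDerivAt (halanayBound K μ D t0) (-μ * (K * exp (-μ * (t - t0)))) t := by
  have := ((((hasDerivAt_id t).sub_const t0).const_mul (-μ)).exp.const_mul K).add_const D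
  exact this.congr_deriv (by simp only [id]; ring)

lemma halanayBound_antitone (hK : 0 ≤ K) (hμ : 0 ≤ μ) : Antitone (halanayBound K μ D t0) :=
  fun s t hst => by
    have : -μ * (t - t0) ≤ -μ * (s - t0) := by nlinarith
    unfold halanayBound
    linarith [mul_le_mul_of_nonneg_left (exp_le_exp.2 this) hK]

lemma halanayBound_self : halanayBound K μ D t0 t0 = K + D := by simp [halanayBound]

lemma halanayBound_delay_le {a b c τ : ℝ} (hK : 0 ≤ K) (hchar : delayChar a b τ μ ≤ 0)
    (T : ℝ) :
    a * halanayBound K μ D t0 T + b * halanayBound K μ D t0 (T - τ) + c ≤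
      -μ * (K * exp (-μ * (T - t0))) + ((a + b) * D + c) := by
  have hsplit : exp (-μ * (T - τ - t0)) = exp (-μ * (T - t0)) * exp (μ * τ) := by
    rw [← exp_add]; ring_nf
  have hroot : a + b * exp (μ * τ) ≤ -μ := by unfold delayChar at hchar; linarith
  have := mul_le_mul_of_nonneg_left hroot (by positivity : 0 ≤ K * exp (-μ * (T - t0)))
  simp only [halanayBound, hsplit]
  linarith

end HalanayBound

theorem le_halanayBound {u τ : ℝ → ℝ} {t0 τmax a b c K μ D : ℝ}
    (hu : ContinuousOn u (Ici t0)) (hτ : ∀ t, 0 ≤ τ t ∧ τ t ≤ τmax) (hb : 0 ≤ b)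
    (hK : 0 ≤ K) (hμ : 0 ≤ μ) (hchar : ∀ t, t0 ≤ t → delayChar a b (τ t) μ ≤ 0)
    (hD : (a + b) * D + c < 0)
    (hinit : ∀ t ∈ Icc (t0 - τmax) t0, u t < halanayBound K μ D t0 t)
    (hDini : ∀ t, t0 ≤ t → diniDeriv u t ≤ a * u t + b * sSup (u '' Icc (t - τ t) t) + c)
    {t : ℝ} (ht : t0 ≤ t) : u t ≤ halanayBound K μ D t0 t := by
  refine le_of_diniDeriv_lt_of_crossing (by linarith [hτ t0]) hu hasDerivAt_halanayBound
    (fun t => mul_nonpos_of_nonpos_of_nonneg (neg_nonpos.2 hμ) (by positivity)) hinit ?_ ht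
  intro T hT heq hhist
  obtain ⟨hτ0, hτmax⟩ := hτ T
  have hsup : sSup (u '' Icc (T - τ T) T) ≤ halanayBound K μ D t0 (T - τ T) := by
    refine csSup_le ((nonempty_Icc.2 (by linarith)).image u) ?_
    rintro _ ⟨s, hs, rfl⟩
    exact (hhist s ⟨by linarith [hs.1], hs.2⟩).trans (halanayBound_antitone hK hμ hs.1)
  calc diniDeriv u T ≤ a * u T + b * sSup (u '' Icc (T - τ T) T) + c := hDini T hT.le
    _ ≤ a * halanayBound K μ D t0 T + b * halanayBound K μ D t0 (T - τ T) + c := by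
      rw [heq]; gcongr
    _ ≤ -μ * (K * exp (-μ * (T - t0))) + ((a + b) * D + c) :=
      halanayBound_delay_le hK (hchar T hT.le) T
    _ < -μ * (K * exp (-μ * (T - t0))) := by linarith

theorem halanay_inequality_general
    (t0 τmax : ℝ) (hτmax : 0 ≤ τmax)
    (u τ : ℝ → ℝ) (a b c σ : ℝ)
    (hu_cont : ContinuousOn u (Ici (t0 - τmax)))
    (hu_nonneg : ∀ t, t0 - τmax ≤ t → 0 ≤ u t)
    (hτ : ∀ t, 0 ≤ τ t ∧ τ t ≤ τmax)
    (hu_bdd : BddAbove (u '' Icc (t0 - τmax) t0))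
    (hb : 0 ≤ b) (hc : 0 ≤ c)
    (hσ : 0 < σ) (hab : a + b ≤ -σ)
    (hDini : ∀ t, t0 ≤ t →
      diniDeriv u t ≤ a * u t + b * sSup (u '' Icc (t - τ t) t) + c)
    (lam : ℝ → ℝ)
    (hlam : ∀ t, t0 ≤ t → 0 < lam t ∧ lam t + a + b * Real.exp (lam t * τ t) = 0)
    (lamHat : ℝ) (hlamHat : lamHat = sInf (lam '' Ici t0)) :
    0 < lamHat ∧
      ∀ t, t0 ≤ t →
        u t ≤ sSup (u '' Icc (t0 - τmax) t0) * Real.exp (-lamHat * (t - t0)) + c / σ := by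
  obtain ⟨lam0, hlam0, hlt⟩ :=
    exists_pos_lt_of_delayChar_eq_zero hb (hab.trans_lt (neg_lt_zero.2 hσ)) τmax
  have hlow : ∀ t ∈ Ici t0, lam0 ≤ lam t := fun t ht =>
    (hlt _ _ (hτ t).1 (hτ t).2 (hlam t ht).2).le
  have hlamHat_pos : 0 < lamHat := hlamHat ▸
    hlam0.trans_le (le_csInf ((nonempty_Ici (a := t0)).image lam) (forall_mem_image.2 hlow))
  have hchar : ∀ t, t0 ≤ t → delayChar a b (τ t) lamHat ≤ 0 := fun t ht =>
    have hle : lamHat ≤ lam t :=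
      hlamHat ▸ csInf_le ⟨lam0, forall_mem_image.2 hlow⟩ (mem_image_of_mem lam ht)
    (delayChar_monotone hb (hτ t).1 hle).trans_eq (hlam t ht).2
  refine ⟨hlamHat_pos, fun t ht => le_of_forall_pos_le_add fun ε hε => ?_⟩
  set M := sSup (u '' Icc (t0 - τmax) t0)
  have hM : ∀ s ∈ Icc (t0 - τmax) t0, u s ≤ M := fun s hs =>
    le_csSup hu_bdd (mem_image_of_mem u hs)
  have hM0 : 0 ≤ M := (hu_nonneg t0 (by linarith)).trans (hM t0 ⟨by linarith, le_rfl⟩)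
  have hD : (a + b) * (c / σ + ε) + c < 0 := by
    have := mul_le_mul_of_nonneg_right hab (by positivity : 0 ≤ c / σ + ε)
    linarith [mul_div_cancel₀ c hσ.ne', mul_pos hσ hε]
  have hinit : ∀ s ∈ Icc (t0 - τmax) t0, u s < halanayBound M lamHat (c / σ + ε) t0 s :=
    fun s hs => calc
      u s < M + (c / σ + ε) := by linarith [hM s hs, div_nonneg hc hσ.le]
      _ = halanayBound M lamHat (c / σ + ε) t0 t0 := halanayBound_self.symm
      _ ≤ halanayBound M lamHat (c / σ + ε) t0 s :=
        halanayBound_antitone hM0 hlamHat_pos.le hs.2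
  have := le_halanayBound (hu_cont.mono (Ici_subset_Ici.2 (by linarith))) hτ hb hM0
    hlamHat_pos.le hchar hD hinit hDini ht
  unfold halanayBound at this
  linarith

/-- **Halanay-type inequality.**  Let `u : [t₀−τ_max, ∞) → ℝ_{≥0}` be
continuous with `D⁺u(t) ≤ a·u(t) + b·sup_{t−τ(t)≤s≤t} u(s) + c` for `t ≥ t₀`, where
`0 ≤ τ(t) ≤ τ_max`, `u` is bounded on `[t₀−τ_max, t₀]`, `a < 0`, `b ≥ 0`, `c ≥ 0` and
`a + b ≤ −σ < 0` for some `σ > 0`.  Then `λ̂ := inf_{t≥t₀} λ(t)` is positive, where `λ(t)`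
is the positive root of `λ + a + b·e^{λτ(t)} = 0`, and for all `t ≥ t₀`,
`u(t) ≤ (sup_{t₀−τ_max ≤ s ≤ t₀} u(s))·e^{−λ̂(t−t₀)} + c/σ`. -/
theorem halanay_inequality
    (t0 τmax : ℝ) (hτmax : 0 ≤ τmax)
    (u τ : ℝ → ℝ) (a b c σ : ℝ)
    (hu_cont : ContinuousOn u (Ici (t0 - τmax)))
    (hu_nonneg : ∀ t, t0 - τmax ≤ t → 0 ≤ u t)
    (hτ : ∀ t, 0 ≤ τ t ∧ τ t ≤ τmax)
    (hu_bdd : BddAbove (u '' Icc (t0 - τmax) t0))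
    (ha : a < 0) (hb : 0 ≤ b) (hc : 0 ≤ c)
    (hσ : 0 < σ) (hab : a + b ≤ -σ)
    (hDini : ∀ t, t0 ≤ t →
      diniDeriv u t ≤ a * u t + b * sSup (u '' Icc (t - τ t) t) + c)
    (lam : ℝ → ℝ)
    (hlam : ∀ t, t0 ≤ t → 0 < lam t ∧ lam t + a + b * Real.exp (lam t * τ t) = 0)
    (lamHat : ℝ) (hlamHat : lamHat = sInf (lam '' Ici t0)) :
    0 < lamHat ∧
      ∀ t, t0 ≤ t →
        u t ≤ sSup (u '' Icc (t0 - τmax) t0) * Real.exp (-lamHat * (t - t0)) + c / σ :=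
  halanay_inequality_general t0 τmax hτmax u τ a b c σ hu_cont hu_nonneg hτ hu_bdd hb hc hσ hab
    hDini lam hlam lamHat hlamHat
end
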